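/- For δ > 0, define g_δ : ℝ² → ℝ by g_δ(x,y) := |y| · 1_{{|x| < δ}}. For z ∈ ℝ² and λ > 0, let ω_{g_δ}(z : λ) := sup_{w ∈ B(z,λ)} g_δ(w) − inf_{w ∈ B(z,λ)} g_δ(w), where B(z,λ) is the closed ball of radius λ centered at z for the sup norm ‖·‖_∞ on ℝ². Let Φ denote the standard Gaussian measure on ℝ² and set ω̄_{g_δ}(ε : Φ) := ∫_{ℝ²} ω_{g_δ}(z : ε) dΦ(z). Then there exists an absolute constant C > 0, independent of δ, such that for all 0 < ε ≤ 1, ω̄_{g_δ}(ε : Φ) ≤ C ε. -/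

import Mathlib

open MeasureTheory Real

/-- The function `g_δ(x,y) = |y| · 1_{|x| < δ}` on `ℝ²`. -/
noncomputable def gdelta (δ : ℝ) (w : ℝ × ℝ) : ℝ := if |w.1| < δ then |w.2| else 0

/-- The oscillation of `g_δ` on the closed ball (for the sup norm on `ℝ²`) of radius `lam`
centered at `z`. -/
noncomputable def oscg (δ : ℝ) (z : ℝ × ℝ) (lam : ℝ) : ℝ :=
  sSup (gdelta δ '' Metric.closedBall z lam) - sInf (gdelta δ '' Metric.closedBall z lam)

/-- The standard Gaussian measure on `ℝ²`. -/
noncomputable def stdGauss2 : Measure (ℝ × ℝ) :=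
  volume.withDensity fun z => ENNReal.ofReal ((2 * π)⁻¹ * Real.exp (-(z.1 ^ 2 + z.2 ^ 2) / 2))

/-!
While the ball `B(z, ε)` stays on one side of the jump lines `|x| = δ`, `g_δ` is either `|y|`
or `0` on it, so its oscillation there is at most `2ε`. Only centres in the band
`δ - ε ≤ |x| ≤ δ + ε` see the jump, and then the oscillation is at most `|y| + ε`. Since `Φ` is
the product of two standard Gaussians, the band has `Φ`-mass at most `4ε / √(2π)` and `|y|` is
integrable, so `ω̄_{g_δ}(ε : Φ) ≤ (2 + 4 𝔼|Y| / √(2π)) ε`.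
-/

open ProbabilityTheory Set

lemma sSup_image_sub_sInf_image_le {α : Type*} {f : α → ℝ} {s : Set α} {a b : ℝ}
    (hs : s.Nonempty) (h : ∀ x ∈ s, a ≤ f x ∧ f x ≤ b) :
    sSup (f '' s) - sInf (f '' s) ≤ b - a := by
  have hsup : sSup (f '' s) ≤ b :=
    csSup_le (hs.image f) (by rintro _ ⟨x, hx, rfl⟩; exact (h x hx).2)
  have hinf : a ≤ sInf (f '' s) :=
    le_csInf (hs.image f) (by rintro _ ⟨x, hx, rfl⟩; exact (h x hx).1)
  linarith

lemma sInf_image_le_sSup_image {α : Type*} {f : α → ℝ} {s : Set α} {a b : ℝ}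
    (hs : s.Nonempty) (h : ∀ x ∈ s, a ≤ f x ∧ f x ≤ b) :
    sInf (f '' s) ≤ sSup (f '' s) :=
  csInf_le_csSup (hs.image f) ⟨a, by rintro _ ⟨x, hx, rfl⟩; exact (h x hx).1⟩
    ⟨b, by rintro _ ⟨x, hx, rfl⟩; exact (h x hx).2⟩

lemma abs_sub_le_of_mem_closedBall {w z : ℝ × ℝ} {r : ℝ} (hw : w ∈ Metric.closedBall z r) :
    |w.1 - z.1| ≤ r ∧ |w.2 - z.2| ≤ r := by
  rwa [Metric.mem_closedBall, Prod.dist_eq, max_le_iff, Real.dist_eq, Real.dist_eq] at hw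

lemma gdelta_nonneg (δ : ℝ) (w : ℝ × ℝ) : 0 ≤ gdelta δ w := by
  unfold gdelta; split_ifs <;> simp

lemma gdelta_le_abs_snd (δ : ℝ) (w : ℝ × ℝ) : gdelta δ w ≤ |w.2| := by
  unfold gdelta; split_ifs <;> simp

section Oscillation

variable {δ ε : ℝ} {z : ℝ × ℝ}

lemma oscg_le_of_forall_mem_closedBall (hε : 0 ≤ ε) {a b : ℝ}
    (h : ∀ w ∈ Metric.closedBall z ε, a ≤ gdelta δ w ∧ gdelta δ w ≤ b) : oscg δ z ε ≤ b - a :=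
  sSup_image_sub_sInf_image_le ⟨z, Metric.mem_closedBall_self hε⟩ h

lemma gdelta_mem_Icc_of_mem_closedBall {w : ℝ × ℝ} (hw : w ∈ Metric.closedBall z ε) :
    0 ≤ gdelta δ w ∧ gdelta δ w ≤ |z.2| + ε := by
  refine ⟨gdelta_nonneg δ w, (gdelta_le_abs_snd δ w).trans ?_⟩
  linarith [abs_sub_abs_le_abs_sub w.2 z.2, (abs_sub_le_of_mem_closedBall hw).2]

lemma oscg_nonneg (hε : 0 ≤ ε) : 0 ≤ oscg δ z ε :=
  sub_nonneg.2 <| sInf_image_le_sSup_image ⟨z, Metric.mem_closedBall_self hε⟩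
    fun _ hw => gdelta_mem_Icc_of_mem_closedBall hw

lemma oscg_le (hε : 0 ≤ ε) :
    oscg δ z ε ≤ 2 * ε + (abs ⁻¹' Icc (δ - ε) (δ + ε)).indicator 1 z.1 * |z.2| := by
  by_cases hband : z.1 ∈ abs ⁻¹' Icc (δ - ε) (δ + ε)
  · rw [indicator_of_mem hband, Pi.one_apply, one_mul]
    linarith [oscg_le_of_forall_mem_closedBall (δ := δ) hε fun _ hw =>
      gdelta_mem_Icc_of_mem_closedBall (z := z) hw]
  rw [indicator_of_notMem hband, zero_mul, add_zero]
  simp only [mem_preimage, mem_Icc, not_and_or, not_le] at hband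
  rcases hband with hin | hout
  · refine (oscg_le_of_forall_mem_closedBall hε (a := |z.2| - ε) (b := |z.2| + ε)
      fun w hw => ?_).trans (by linarith)
    obtain ⟨h1, h2⟩ := abs_sub_le_of_mem_closedBall hw
    have hw1 : |w.1| < δ := by linarith [abs_sub_abs_le_abs_sub w.1 z.1]
    rw [gdelta, if_pos hw1]
    constructor <;> linarith [abs_sub_abs_le_abs_sub w.2 z.2, abs_sub_abs_le_abs_sub z.2 w.2,
      abs_sub_comm w.2 z.2]
  · refine (oscg_le_of_forall_mem_closedBall hε (a := 0) (b := 0) fun w hw => ?_).trans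
      (by linarith)
    have hw1 : ¬ |w.1| < δ := by
      linarith [abs_sub_abs_le_abs_sub z.1 w.1, abs_sub_comm z.1 w.1,
        (abs_sub_le_of_mem_closedBall hw).1]
    simp [gdelta, if_neg hw1]

end Oscillation

lemma volume_abs_preimage_le (s : Set ℝ) : volume (abs ⁻¹' s) ≤ 2 * volume s := by
  have hsub : abs ⁻¹' s ⊆ s ∪ -s := fun x hx => by
    rcases abs_choice x with h | h
    · exact Or.inl (by rwa [mem_preimage, h] at hx)
    · exact Or.inr (by rwa [mem_preimage, h, ← mem_neg] at hx)
  calc volume (abs ⁻¹' s) ≤ volume (s ∪ -s) := measure_mono hsub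
    _ ≤ volume s + volume (-s) := measure_union_le s (-s)
    _ = 2 * volume s := by rw [Measure.measure_neg, two_mul]

lemma gaussianPDFReal_le (μ : ℝ) (v : NNReal) (x : ℝ) :
    gaussianPDFReal μ v x ≤ (√(2 * π * v))⁻¹ := by
  rw [gaussianPDFReal]
  refine mul_le_of_le_one_right (by positivity) (exp_le_one_iff.2 ?_)
  rw [neg_div]
  exact neg_nonpos.2 (by positivity)

lemma gaussianReal_apply_le {v : NNReal} (μ : ℝ) (hv : v ≠ 0) (s : Set ℝ) :
    gaussianReal μ v s ≤ ENNReal.ofReal (√(2 * π * v))⁻¹ * volume s := by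
  rw [gaussianReal_apply μ hv, ← setLIntegral_const]
  exact lintegral_mono fun x => ENNReal.ofReal_le_ofReal (gaussianPDFReal_le μ v x)

lemma gaussianReal_real_abs_preimage_Icc_le {v : NNReal} (μ : ℝ) (hv : v ≠ 0) {a b : ℝ}
    (hab : a ≤ b) :
    (gaussianReal μ v).real (abs ⁻¹' Icc a b) ≤ (√(2 * π * v))⁻¹ * (2 * (b - a)) := by
  refine ENNReal.toReal_le_of_le_ofReal (by have := sub_nonneg.2 hab; positivity) ?_
  calc gaussianReal μ v (abs ⁻¹' Icc a b)
      ≤ ENNReal.ofReal (√(2 * π * v))⁻¹ * (2 * volume (Icc a b)) :=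
        (gaussianReal_apply_le μ hv _).trans (by gcongr; exact volume_abs_preimage_le _)
    _ = ENNReal.ofReal ((√(2 * π * v))⁻¹ * (2 * (b - a))) := by
        rw [Real.volume_Icc, ENNReal.ofReal_mul (by positivity),
          ENNReal.ofReal_mul zero_le_two, ENNReal.ofReal_ofNat]

lemma stdGauss2_eq_prod : stdGauss2 = (gaussianReal 0 1).prod (gaussianReal 0 1) := by
  rw [gaussianReal_of_var_ne_zero 0 one_ne_zero,
    prod_withDensity (measurable_gaussianPDF 0 1) (measurable_gaussianPDF 0 1),
    ← Measure.volume_eq_prod, stdGauss2]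
  congr 1
  funext z
  rw [gaussianPDF, gaussianPDF, ← ENNReal.ofReal_mul (gaussianPDFReal_nonneg 0 1 _),
    gaussianPDFReal, gaussianPDFReal]
  congr 1
  have h2π : (√(2 * π))⁻¹ * (√(2 * π))⁻¹ = (2 * π)⁻¹ := by
    rw [← mul_inv, Real.mul_self_sqrt (by positivity)]
  simp only [NNReal.coe_one, mul_one, sub_zero]
  rw [← h2π, show -(z.1 ^ 2 + z.2 ^ 2) / 2 = -z.1 ^ 2 / 2 + -z.2 ^ 2 / 2 by ring, exp_add]
  ring

lemma integrable_abs_gaussianReal (μ : ℝ) (v : NNReal) :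
    Integrable (fun y : ℝ => |y|) (gaussianReal μ v) :=
  ((memLp_id_gaussianReal 1).integrable le_rfl).abs

instance : IsProbabilityMeasure stdGauss2 := stdGauss2_eq_prod ▸ inferInstance

lemma integrable_indicator_mul_abs_stdGauss2 {s : Set ℝ} (hs : MeasurableSet s) :
    Integrable (fun z : ℝ × ℝ => s.indicator 1 z.1 * |z.2|) stdGauss2 := by
  rw [stdGauss2_eq_prod]
  exact ((integrable_const 1).indicator hs).mul_prod (integrable_abs_gaussianReal 0 1)

lemma integral_stdGauss2_const_add_indicator_mul_abs (c : ℝ) {s : Set ℝ} (hs : MeasurableSet s) :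
    ∫ z, c + s.indicator 1 z.1 * |z.2| ∂stdGauss2
      = c + (gaussianReal 0 1).real s * ∫ y, |y| ∂gaussianReal 0 1 := by
  rw [integral_add (integrable_const c) (integrable_indicator_mul_abs_stdGauss2 hs),
    integral_const, probReal_univ, one_smul, stdGauss2_eq_prod, integral_prod_mul,
    integral_indicator_one hs]

/-- The Gaussian-averaged modulus of continuity of `g_δ` is linear in `ε`, uniformly in `δ`:
there is an absolute constant `C > 0` such that `ω̄_{g_δ}(ε : Φ) ≤ C ε` for all `0 < ε ≤ 1`. -/
theorem statement15 :
    ∃ C > (0 : ℝ), ∀ δ : ℝ, 0 < δ → ∀ ε : ℝ, 0 < ε → ε ≤ 1 →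
      ∫ z, oscg δ z ε ∂stdGauss2 ≤ C * ε := by
  set M := ∫ y, |y| ∂gaussianReal 0 1
  have hM : 0 ≤ M := integral_nonneg fun y => abs_nonneg y
  refine ⟨2 + 4 * (√(2 * π))⁻¹ * M, by positivity, fun δ _ ε hε _ => ?_⟩
  have hband : MeasurableSet (abs ⁻¹' Icc (δ - ε) (δ + ε)) := measurable_abs measurableSet_Icc
  calc ∫ z, oscg δ z ε ∂stdGauss2
      ≤ ∫ z, 2 * ε + (abs ⁻¹' Icc (δ - ε) (δ + ε)).indicator 1 z.1 * |z.2| ∂stdGauss2 :=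
        integral_mono_of_nonneg (.of_forall fun z => oscg_nonneg hε.le)
          ((integrable_const _).add (integrable_indicator_mul_abs_stdGauss2 hband))
          (.of_forall fun z => oscg_le hε.le)
    _ = 2 * ε + (gaussianReal 0 1).real (abs ⁻¹' Icc (δ - ε) (δ + ε)) * M :=
        integral_stdGauss2_const_add_indicator_mul_abs _ hband
    _ ≤ 2 * ε + (√(2 * π * (1 : NNReal)))⁻¹ * (2 * (δ + ε - (δ - ε))) * M := by
        gcongr
        exact gaussianReal_real_abs_preimage_Icc_le 0 one_ne_zero (by linarith)
    _ = (2 + 4 * (√(2 * π))⁻¹ * M) * ε := by rw [NNReal.coe_one, mul_one]; ring
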